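/- Let P and Q be p-strongly equivalent LPMLN programs and U = lit(P ∪ Q). For any two consistent subsets X and Y of U, there exists a flattening extension E^k(P, U) such that both X and Y are probabilistic stable models of E^k(P, U). -/

import Mathlib

/-!
In a flattening extension `E` of `E⁰(P, U)` the hard facts `α : l` (`l ∈ U`) make every
consistent subset of `U` a stable model, and a stable model `J` satisfies exactly as many
hard rules as `J ∩ U`. Hence the probabilistic stable models of `E` are the consistent
subsets of `U` satisfying the most hard rules. Flattening at such a maximiser `Z` with a fresh
atom makes `Z` satisfy one more hard rule and every other subset of `U` two more; repeating
this while `X` or `Y` is not maximal terminates with both maximal.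
-/

open scoped Classical

noncomputable section

namespace LPMLN

/-- A ground literal: an atom (numbered by `ℕ`) or its classical negation. -/
inductive Lit where
  | pos : ℕ → Lit
  | neg : ℕ → Lit
deriving DecidableEq

/-- The complementary literal. -/
def Lit.compl : Lit → Lit
  | .pos a => .neg a
  | .neg a => .pos a

/-- A finite set of literals is consistent if it contains no complementary pair. -/
def Consistent (I : Finset Lit) : Prop := ∀ l ∈ I, l.compl ∉ I

/-- An ASP rule, given by its head, positive body and negative body. -/
structure Rule where
  head : Finset Lit
  pos : Finset Lit
  neg : Finset Lit
deriving DecidableEq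

/-- The literals occurring in a rule. -/
def Rule.lits (r : Rule) : Finset Lit := r.head ∪ r.pos ∪ r.neg

/-- Satisfaction of a rule by a set of literals. -/
def Sat (I : Finset Lit) (r : Rule) : Prop :=
  r.pos ⊆ I → r.neg ∩ I = ∅ → (r.head ∩ I).Nonempty

/-- Satisfaction of an ASP program. -/
def SatProg (I : Finset Lit) (prog : Finset Rule) : Prop := ∀ r ∈ prog, Sat I r

/-- The GL-reduct of an ASP program w.r.t. an interpretation. -/
def glReduct (prog : Finset Rule) (I : Finset Lit) : Finset Rule :=
  (prog.filter fun r => r.neg ∩ I = ∅).image fun r => ⟨r.head, r.pos, ∅⟩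

/-- `I` is a stable model of the ASP program `prog`: `I` is a consistent set of
literals satisfying the GL-reduct, no proper subset of which satisfies the GL-reduct. -/
def AspStable (prog : Finset Rule) (I : Finset Lit) : Prop :=
  Consistent I ∧ SatProg I (glReduct prog I) ∧ ∀ J ⊂ I, ¬ SatProg J (glReduct prog I)

/-- A weight: a real number (soft rule) or the symbol `α` (hard rule). -/
inductive Weight where
  | soft : ℝ → Weight
  | hard : Weight

/-- The real value of a soft weight (hard weights get the dummy value 0). -/
def Weight.val : Weight → ℝ
  | .soft w => w
  | .hard => 0

/-- A weighted rule `w : r`. -/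
structure WRule where
  w : Weight
  r : Rule

/-- An LPMLN program: a finite set of weighted rules. -/
abbrev Program := Finset WRule

/-- The LPMLN reduct `P_I`: the rules of `P` satisfied by `I`. -/
def reduct (P : Program) (I : Finset Lit) : Program := P.filter fun wr => Sat I wr.r

/-- The unweighted ASP counterpart of an LPMLN program. -/
def unweighted (P : Program) : Finset Rule := P.image fun wr => wr.r

/-- `I` is a stable model of the LPMLN program `P`: `I` is a stable model of the
unweighted ASP counterpart of the LPMLN reduct `P_I`. -/
def Stable (P : Program) (I : Finset Lit) : Prop :=
  AspStable (unweighted (reduct P I)) I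

/-- The literals occurring in an LPMLN program. -/
def litset (P : Program) : Finset Lit := P.biUnion fun wr => wr.r.lits

/-- `(X, Y)` is an SE-interpretation: a pair of interpretations with `X ⊆ Y`. -/
def SEInterp (X Y : Finset Lit) : Prop := Consistent X ∧ Consistent Y ∧ X ⊆ Y

/-- `(X, Y)` is an SE-model of the LPMLN program `P`: an SE-interpretation such that
`X` satisfies the GL-reduct (w.r.t. `Y`) of the unweighted version of `P_Y`. -/
def SEModel (P : Program) (X Y : Finset Lit) : Prop :=
  SEInterp X Y ∧ SatProg X (glReduct (unweighted (reduct P Y)) Y)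

/-- The number of hard rules of `P` satisfied by `I`. -/
def hardCount (P : Program) (I : Finset Lit) : ℕ :=
  ((reduct P I).filter fun wr => wr.w = Weight.hard).card

/-- The sum of the weights of the soft rules of `P` satisfied by `I`. -/
def softWeight (P : Program) (I : Finset Lit) : ℝ :=
  ∑ wr ∈ ((reduct P I).filter fun wr => wr.w ≠ Weight.hard), wr.w.val

/-- The weight degree `W(P, I) = exp(Σ_{w:r ∈ P_I} w)`, viewed as the real-valued
function `A ↦ exp(c' + k'·A)` of the value `A` given to the symbol `α`, where `k'` is
the number of hard rules of `P` satisfied by `I` and `c'` the sum of the weights of the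
soft rules of `P` satisfied by `I`. -/
def wdeg (P : Program) (I : Finset Lit) (A : ℝ) : ℝ :=
  Real.exp (softWeight P I + A * hardCount P I)

/-- The (finite) set of stable models of `P` (every stable model of `P` is a subset of
`litset P`). -/
def SMset (P : Program) : Finset (Finset Lit) :=
  (litset P).powerset.filter fun I => Stable P I

/-- The probability degree `Pr(P, I)`: the limit, as `α → ∞`, of
`W(P, I) / Σ_{I' ∈ SM(P)} W(P, I')` if `I` is a stable model of `P`, and `0` otherwise. -/
def PrDeg (P : Program) (I : Finset Lit) : ℝ :=
  if Stable P I then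
    Filter.limUnder Filter.atTop fun A => wdeg P I A / ∑ I' ∈ SMset P, wdeg P I' A
  else 0

/-- `I` is a probabilistic stable model of `P`: a stable model of `P` satisfying the
maximum number of hard rules of `P` (equivalently, with nonzero probability degree). -/
def PStable (P : Program) (I : Finset Lit) : Prop :=
  Stable P I ∧ ∀ J, Stable P J → hardCount P J ≤ hardCount P I

/-- Semi-strong equivalence: the extensions by any LPMLN program have the same
stable models. -/
def SemiStrongEq (P Q : Program) : Prop :=
  ∀ R : Program, ∀ I, Stable (P ∪ R) I ↔ Stable (Q ∪ R) I

/-- p-ordinary equivalence: same stable models and same probability degrees. -/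
def POrdEq (P Q : Program) : Prop :=
  (∀ I, Stable P I ↔ Stable Q I) ∧ ∀ I, Stable P I → PrDeg P I = PrDeg Q I

/-- p-strong equivalence: p-ordinary equivalence under every extension. -/
def PStrongEq (P Q : Program) : Prop := ∀ R : Program, POrdEq (P ∪ R) (Q ∪ R)

/-- Comparison of the symbolic weight degrees of two interpretations w.r.t. `P`:
`exp(c + k·α) ≤ exp(c' + k'·α)` iff `k < k'`, or `k = k'` and `c ≤ c'`. -/
def WLe (P : Program) (I J : Finset Lit) : Prop :=
  hardCount P I < hardCount P J ∨
    (hardCount P I = hardCount P J ∧ softWeight P I ≤ softWeight P J)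

/-- q-strong equivalence: same stable models under every extension, with
order-preserving weight degrees. -/
def QStrongEq (P Q : Program) : Prop :=
  ∀ R : Program,
    (∀ I, Stable (P ∪ R) I ↔ Stable (Q ∪ R) I) ∧
    ∀ X Y, Stable (P ∪ R) X → Stable (P ∪ R) Y → (WLe (P ∪ R) X Y ↔ WLe (Q ∪ R) X Y)

/-- A soft stable model of `P`: a stable model of `P` satisfying all hard rules of `P`. -/
def SoftStable (P : Program) (I : Finset Lit) : Prop :=
  Stable P I ∧ ∀ wr ∈ P, wr.w = Weight.hard → Sat I wr.r

/-- A soft SE-model of `P`: an SE-model `(X, Y)` of `P` such that `Y` satisfies all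
hard rules of `P`. -/
def SoftSEModel (P : Program) (X Y : Finset Lit) : Prop :=
  SEModel P X Y ∧ ∀ wr ∈ P, wr.w = Weight.hard → Sat Y wr.r

/-- The (finite) set of soft stable models of `P`. -/
def SSMset (P : Program) : Finset (Finset Lit) :=
  (litset P).powerset.filter fun I => SoftStable P I

/-- The probability degree under the soft stable model semantics:
`Pr_s(P, X) = W_s(P, X) / Σ_{X' ∈ SSM(P)} W_s(P, X')`, where
`W_s(P, X) = exp(Σ_{w:r ∈ P^s, X ⊨ r} w)`. -/
def PrS (P : Program) (X : Finset Lit) : ℝ :=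
  Real.exp (softWeight P X) / ∑ X' ∈ SSMset P, Real.exp (softWeight P X')

/-- sp-strong equivalence: p-strong equivalence under the soft stable model
semantics. -/
def SPStrongEq (P Q : Program) : Prop :=
  ∀ R : Program,
    (∀ I, SoftStable (P ∪ R) I ↔ SoftStable (Q ∪ R) I) ∧
    ∀ X, SoftStable (P ∪ R) X → PrS (P ∪ R) X = PrS (Q ∪ R) X

/-- `(X, Y)` is a UE-model of `P`: an SE-model with `X = Y`, or with `X ⊊ Y` such that
no `X'` strictly between `X` and `Y` gives an SE-model `(X', Y)`. -/
def UEModel (P : Program) (X Y : Finset Lit) : Prop :=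
  SEModel P X Y ∧
    (X = Y ∨ (X ⊂ Y ∧ ∀ X', X ⊂ X' → X' ⊂ Y → ¬ SEModel P X' Y))

/-- A program consisting of weighted facts only (rules with empty bodies). -/
def IsFactProg (R : Program) : Prop := ∀ wr ∈ R, wr.r.pos = ∅ ∧ wr.r.neg = ∅

/-- p-uniform equivalence: p-ordinary equivalence under every extension by a set of
weighted facts. -/
def PUniformEq (P Q : Program) : Prop :=
  ∀ R : Program, IsFactProg R → POrdEq (P ∪ R) (Q ∪ R)

/-- The flattening rules `R(X, Y, a)`: the two hard rules
`α : ← X, not Y, a` and `α : a ← X, not Y`. -/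
def flatten (X Y : Finset Lit) (a : ℕ) : Program :=
  {⟨Weight.hard, ⟨∅, X ∪ {Lit.pos a}, Y⟩⟩, ⟨Weight.hard, ⟨{Lit.pos a}, X, Y⟩⟩}

/-- The hard fact `α : l`. -/
def factOf (l : Lit) : WRule := ⟨Weight.hard, ⟨{l}, ∅, ∅⟩⟩

/-- The base flattening extension `E⁰(P, U) = P ∪ {α : a | a ∈ U}`. -/
def E0 (P : Program) (U : Finset Lit) : Program := P ∪ U.image factOf

/-- `IsFlatExt P U k E` holds iff `E` is a flattening extension `E^k(P, U)`:
`E⁰(P, U) = P ∪ {α : a | a ∈ U}` and `E^{i+1}(P, U) = E^i(P, U) ∪ R(X ∩ U, U − X, c)`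
where `X` is a probabilistic stable model of `E^i(P, U)` and `c` is a fresh atom. -/
inductive IsFlatExt (P : Program) (U : Finset Lit) : ℕ → Program → Prop
  | zero : IsFlatExt P U 0 (E0 P U)
  | succ {i : ℕ} {E : Program} {X : Finset Lit} {c : ℕ} :
      IsFlatExt P U i E → PStable E X →
      Lit.pos c ∉ litset E → Lit.neg c ∉ litset E →
      IsFlatExt P U (i + 1) (E ∪ flatten (X ∩ U) (U \ X) c)

section

variable {α : Type*} [DecidableEq α]

lemma inter_inter_eq_of_subset {s J U : Finset α} (h : s ⊆ U) : s ∩ (J ∩ U) = s ∩ J := by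
  rw [Finset.inter_comm J U, ← Finset.inter_assoc, Finset.inter_eq_left.2 h]

lemma subset_and_sdiff_inter_eq_empty_iff {Z I U : Finset α} (hI : I ⊆ U) :
    (Z ⊆ I ∧ (U \ Z) ∩ I = ∅) ↔ I = Z := by
  refine ⟨fun ⟨hZI, hdisj⟩ => (Finset.Subset.antisymm ?_ hZI), fun h => ⟨h.ge, by simp [h]⟩⟩
  intro l hl
  by_contra hlZ
  have : l ∈ (U \ Z) ∩ I := by simp [hI hl, hlZ, hl]
  simp [hdisj] at this

end

/-- The potential is the total excess of the scores over the smaller score of `x` and `y`;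
a step at a maximiser `z` lowers the excess of `z` by one and leaves every other excess
unchanged. -/
theorem exists_isMaxOn_pair_of_step {α β : Type*} [DecidableEq α] (C : Finset α) {x y : α}
    (hx : x ∈ C) (hy : y ∈ C) (Reach : β → Prop) (f : β → α → ℕ)
    (step : ∀ b, Reach b → ∀ z ∈ C, IsMaxOn (f b) C z →
      ∃ b', Reach b' ∧ ∀ I ∈ C, f b' I = f b I + if I = z then 1 else 2)
    {b₀ : β} (h₀ : Reach b₀) :
    ∃ b, Reach b ∧ IsMaxOn (f b) C x ∧ IsMaxOn (f b) C y := by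
  let Φ : β → ℕ := fun b => ∑ I ∈ C, (f b I - min (f b x) (f b y))
  induction hΦ : Φ b₀ using Nat.strong_induction_on generalizing b₀ with
  | _ n ih =>
  obtain ⟨z, hz, hzmax⟩ := Finset.exists_max_image C (f b₀) ⟨x, hx⟩
  by_cases hdone : f b₀ x = f b₀ z ∧ f b₀ y = f b₀ z
  · exact ⟨b₀, h₀, fun I hI => hdone.1 ▸ hzmax I hI, fun I hI => hdone.2 ▸ hzmax I hI⟩
  obtain ⟨b, hb, hf⟩ := step b₀ h₀ z hz hzmax
  have hfz : f b z = f b₀ z + 1 := by simpa using hf z hz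
  have hf_le : ∀ I ∈ C, f b I ≤ f b₀ I + 2 := fun I hI => by
    rw [hf I hI]; split_ifs <;> omega
  have hmin : min (f b x) (f b y) = min (f b₀ x) (f b₀ y) + 2 := by
    have := hzmax x hx; have := hzmax y hy
    have hfx := hf x hx; have hfy := hf y hy
    by_cases hxz : x = z <;> by_cases hyz : y = z
    · exact absurd ⟨hxz ▸ rfl, hyz ▸ rfl⟩ hdone
    · subst hxz; rw [if_pos rfl] at hfx; rw [if_neg hyz] at hfy; omega
    · subst hyz; rw [if_neg hxz] at hfx; rw [if_pos rfl] at hfy; omega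
    · rw [if_neg hxz] at hfx; rw [if_neg hyz] at hfy; omega
  refine ih (Φ b) (hΦ ▸ Finset.sum_lt_sum (fun I hI => ?_) ⟨z, hz, ?_⟩) hb rfl
  · have := hf_le I hI
    omega
  · have := hzmax x hx; have := hzmax y hy
    omega

def Lit.atom : Lit → ℕ
  | .pos a => a
  | .neg a => a

lemma exists_fresh_atom (E : Program) :
    ∃ c : ℕ, Lit.pos c ∉ litset E ∧ Lit.neg c ∉ litset E := by
  obtain ⟨c, hc⟩ := Infinite.exists_notMem_finset ((litset E).image Lit.atom)
  exact ⟨c, fun h => hc (Finset.mem_image_of_mem Lit.atom h),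
    fun h => hc (Finset.mem_image_of_mem Lit.atom h)⟩

lemma lits_subset_litset {P : Program} {wr : WRule} (h : wr ∈ P) : wr.r.lits ⊆ litset P :=
  Finset.subset_biUnion_of_mem (fun wr => wr.r.lits) h

lemma body_inter_iff {A B J U : Finset Lit} (hA : A ⊆ U) (hB : B ⊆ U) :
    (A ⊆ J ∩ U ∧ B ∩ (J ∩ U) = ∅) ↔ (A ⊆ J ∧ B ∩ J = ∅) := by
  rw [Finset.subset_inter_iff, inter_inter_eq_of_subset hB]
  exact ⟨fun h => ⟨h.1.1, h.2⟩, fun h => ⟨⟨h.1, hA⟩, h.2⟩⟩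

lemma sat_iff {I : Finset Lit} {r : Rule} :
    Sat I r ↔ (r.pos ⊆ I ∧ r.neg ∩ I = ∅ → (r.head ∩ I).Nonempty) := by
  rw [Sat, and_imp]

lemma sat_inter_iff {r : Rule} {J U : Finset Lit} (h : r.lits ⊆ U) :
    Sat (J ∩ U) r ↔ Sat J r := by
  have hU : r.head ⊆ U ∧ r.pos ⊆ U ∧ r.neg ⊆ U := by
    simpa [Rule.lits, Finset.union_subset_iff, and_assoc] using h
  rw [sat_iff, sat_iff, body_inter_iff hU.2.1 hU.2.2, inter_inter_eq_of_subset hU.1]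

lemma hardCount_inter_of_litset_subset {E : Program} {U : Finset Lit} (h : litset E ⊆ U)
    (J : Finset Lit) : hardCount E (J ∩ U) = hardCount E J := by
  have : reduct E (J ∩ U) = reduct E J := by
    unfold reduct
    exact Finset.filter_congr fun wr hwr => sat_inter_iff ((lits_subset_litset hwr).trans h)
  rw [hardCount, hardCount, this]

lemma litset_E0_subset {P : Program} {U : Finset Lit} (h : litset P ⊆ U) :
    litset (E0 P U) ⊆ U := by
  rw [litset, E0, Finset.union_biUnion, Finset.union_subset_iff]
  refine ⟨h, Finset.biUnion_subset.2 fun wr hwr => ?_⟩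
  obtain ⟨l, hl, rfl⟩ := Finset.mem_image.1 hwr
  simpa [factOf, Rule.lits] using hl

lemma hardCount_union_of_disjoint {E F : Program} (h : Disjoint E F) (I : Finset Lit) :
    hardCount (E ∪ F) I = hardCount E I + hardCount F I := by
  simp only [hardCount, reduct, Finset.filter_union]
  rw [Finset.card_union_of_disjoint]
  exact h.mono ((Finset.filter_subset _ _).trans (Finset.filter_subset _ _))
    ((Finset.filter_subset _ _).trans (Finset.filter_subset _ _))

lemma disjoint_flatten {E : Program} {A B : Finset Lit} {c : ℕ} (hc : Lit.pos c ∉ litset E) :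
    Disjoint E (flatten A B c) := by
  rw [Finset.disjoint_right]
  intro wr hwr hwrE
  apply hc (lits_subset_litset hwrE _)
  simp only [flatten, Finset.mem_insert, Finset.mem_singleton] at hwr
  rcases hwr with rfl | rfl <;> simp [Rule.lits]

/-- Whether or not `c ∈ J`, exactly one of the two flattening rules fails when `J`
satisfies the body `A, not B`. -/
lemma hardCount_flatten (A B : Finset Lit) (c : ℕ) (J : Finset Lit) :
    hardCount (flatten A B c) J = if A ⊆ J ∧ B ∩ J = ∅ then 1 else 2 := by
  have hne : (⟨Weight.hard, ⟨∅, A ∪ {Lit.pos c}, B⟩⟩ : WRule) ≠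
      ⟨Weight.hard, ⟨{Lit.pos c}, A, B⟩⟩ := by simp
  by_cases hbody : A ⊆ J ∧ B ∩ J = ∅ <;> by_cases hc : Lit.pos c ∈ J <;>
    simp_all [hardCount, reduct, flatten, Finset.filter_insert, Finset.filter_singleton, sat_iff,
      Finset.insert_subset_iff]

lemma hardCount_flatten_inter {A B U : Finset Lit} (hA : A ⊆ U) (hB : B ⊆ U) (c : ℕ)
    (J : Finset Lit) : hardCount (flatten A B c) (J ∩ U) = hardCount (flatten A B c) J := by
  simp only [hardCount_flatten, body_inter_iff hA hB]

lemma hardCount_flatten_of_subset {Z I U : Finset Lit} (hI : I ⊆ U) (c : ℕ) :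
    hardCount (flatten Z (U \ Z) c) I = if I = Z then 1 else 2 := by
  rw [hardCount_flatten, if_congr (subset_and_sdiff_inter_eq_empty_iff hI) rfl rfl]

lemma stable_of_facts {E : Program} {I : Finset Lit} (hfacts : ∀ l ∈ I, factOf l ∈ E)
    (hc : Consistent I) : Stable E I := by
  refine ⟨hc, ?_, fun J hJI hJ => ?_⟩
  · intro r hr
    simp only [glReduct, unweighted, reduct, Finset.mem_image, Finset.mem_filter] at hr
    obtain ⟨_, ⟨⟨wr, ⟨_, hsat⟩, rfl⟩, hneg⟩, rfl⟩ := hr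
    exact fun hpos _ => hsat hpos hneg
  · obtain ⟨l, hlI, hlJ⟩ := Finset.exists_of_ssubset hJI
    have hfact : (⟨{l}, ∅, ∅⟩ : Rule) ∈ glReduct (unweighted (reduct E I)) I := by
      simp only [glReduct, unweighted, reduct, Finset.mem_image, Finset.mem_filter]
      exact ⟨(factOf l).r, ⟨⟨factOf l, ⟨hfacts l hlI, fun _ _ => ⟨l, by simp [factOf, hlI]⟩⟩,
        rfl⟩, by simp [factOf]⟩, rfl⟩
    obtain ⟨l', hl'⟩ := hJ _ hfact (Finset.empty_subset _) (Finset.empty_inter _)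
    simp only [Finset.mem_inter, Finset.mem_singleton] at hl'
    exact hlJ (hl'.1 ▸ hl'.2)

def consistentSubsets (U : Finset Lit) : Finset (Finset Lit) := U.powerset.filter Consistent

lemma mem_consistentSubsets {U I : Finset Lit} :
    I ∈ consistentSubsets U ↔ I ⊆ U ∧ Consistent I := by
  rw [consistentSubsets, Finset.mem_filter, Finset.mem_powerset]

lemma Consistent.inter {J : Finset Lit} (h : Consistent J) (U : Finset Lit) :
    Consistent (J ∩ U) :=
  fun l hl hl' => h l (Finset.mem_inter.1 hl).1 (Finset.mem_inter.1 hl').1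

namespace IsFlatExt

variable {P : Program} {U : Finset Lit} {i : ℕ} {E : Program}

lemma E0_subset (h : IsFlatExt P U i E) : E0 P U ⊆ E := by
  induction h with
  | zero => exact Finset.Subset.refl _
  | succ _ _ _ _ ih => exact ih.trans Finset.subset_union_left

lemma hardCount_inter (hPU : litset P ⊆ U) (h : IsFlatExt P U i E) (J : Finset Lit) :
    hardCount E (J ∩ U) = hardCount E J := by
  induction h generalizing J with
  | zero => exact hardCount_inter_of_litset_subset (litset_E0_subset hPU) J
  | succ _ _ hc _ ih =>
    rw [hardCount_union_of_disjoint (disjoint_flatten hc), hardCount_union_of_disjoint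
      (disjoint_flatten hc), ih, hardCount_flatten_inter Finset.inter_subset_right
      Finset.sdiff_subset]

lemma pStable_of_isMaxOn (hPU : litset P ⊆ U) (h : IsFlatExt P U i E) {Z : Finset Lit}
    (hZ : Z ∈ consistentSubsets U) (hmax : IsMaxOn (hardCount E) (consistentSubsets U) Z) :
    PStable E Z := by
  obtain ⟨hZU, hZc⟩ := mem_consistentSubsets.1 hZ
  refine ⟨stable_of_facts (fun l hl => h.E0_subset ?_) hZc, fun J hJ => ?_⟩
  · exact Finset.mem_union_right _ (Finset.mem_image_of_mem _ (hZU hl))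
  · rw [← h.hardCount_inter hPU J]
    exact hmax (mem_consistentSubsets.2 ⟨Finset.inter_subset_right, hJ.1.inter U⟩)

lemma exists_succ (hPU : litset P ⊆ U) (h : IsFlatExt P U i E) {Z : Finset Lit}
    (hZ : Z ∈ consistentSubsets U) (hmax : IsMaxOn (hardCount E) (consistentSubsets U) Z) :
    ∃ E', IsFlatExt P U (i + 1) E' ∧ ∀ I ∈ consistentSubsets U,
      hardCount E' I = hardCount E I + if I = Z then 1 else 2 := by
  obtain ⟨c, hc⟩ := exists_fresh_atom E
  have hZU := (mem_consistentSubsets.1 hZ).1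
  have hE' := h.succ (h.pStable_of_isMaxOn hPU hZ hmax) hc.1 hc.2
  rw [Finset.inter_eq_left.2 hZU] at hE'
  refine ⟨_, hE', fun I hI => ?_⟩
  rw [hardCount_union_of_disjoint (disjoint_flatten hc.1),
    hardCount_flatten_of_subset (mem_consistentSubsets.1 hI).1]

end IsFlatExt

theorem flattening_extension_exists_general (P Q : Program)
    (X Y : Finset Lit)
    (hXc : Consistent X) (hXU : X ⊆ litset (P ∪ Q))
    (hYc : Consistent Y) (hYU : Y ⊆ litset (P ∪ Q)) :
    ∃ (k : ℕ) (E : Program), IsFlatExt P (litset (P ∪ Q)) k E ∧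
      PStable E X ∧ PStable E Y := by
  set U := litset (P ∪ Q)
  have hPU : litset P ⊆ U :=
    Finset.biUnion_subset_biUnion_of_subset_left _ Finset.subset_union_left
  have hX : X ∈ consistentSubsets U := mem_consistentSubsets.2 ⟨hXU, hXc⟩
  have hY : Y ∈ consistentSubsets U := mem_consistentSubsets.2 ⟨hYU, hYc⟩
  obtain ⟨E, ⟨k, hE⟩, hXmax, hYmax⟩ :=
    exists_isMaxOn_pair_of_step (consistentSubsets U) hX hY
      (fun E => ∃ k, IsFlatExt P U k E) hardCount
      (fun _ ⟨k, hE⟩ _ hZ hZmax =>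
        let ⟨E', hE', hcount⟩ := hE.exists_succ hPU hZ hZmax
        ⟨E', ⟨k + 1, hE'⟩, hcount⟩)
      ⟨0, IsFlatExt.zero⟩
  exact ⟨k, E, hE, hE.pStable_of_isMaxOn hPU hX hXmax, hE.pStable_of_isMaxOn hPU hY hYmax⟩

/-- Let `P` and `Q` be p-strongly equivalent LPMLN programs and
`U = lit(P ∪ Q)`. For any two consistent subsets `X` and `Y` of `U`, there exists a
flattening extension `E^k(P, U)` such that both `X` and `Y` are probabilistic stable
models of `E^k(P, U)`. -/
theorem flattening_extension_exists (P Q : Program) (hPQ : PStrongEq P Q)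
    (X Y : Finset Lit)
    (hXc : Consistent X) (hXU : X ⊆ litset (P ∪ Q))
    (hYc : Consistent Y) (hYU : Y ⊆ litset (P ∪ Q)) :
    ∃ (k : ℕ) (E : Program), IsFlatExt P (litset (P ∪ Q)) k E ∧
      PStable E X ∧ PStable E Y :=
  flattening_extension_exists_general P Q X Y hXc hXU hYc hYU

end LPMLN
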